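/- arXiv:2509.02365 — 6 statements merged into one kernel-verified Lean document; each statement's English description precedes it below -/
import Mathlib

section
/- Let A be an associative unital ℂ-algebra, let q ∈ ℂ be nonzero, and let x, y, z be invertible elements of A satisfying xy = q²yx, xz = zx, yz = zy. Define K := x, E := q·y·(z − x), and F := y⁻¹·(1 − z⁻¹x⁻¹). Then the quantum sl₂ relations hold: K·E = q²·E·K, K·F = q⁻²·F·K, and E·F − F·E = (q − q⁻¹)·(K − K⁻¹). -/
/-!
Write `c_u a = u a u⁻¹` for conjugation by a unit, an algebra automorphism. The hypotheses say
`c_x y = q² y` and `c_x z = z`, hence `c_x E = q² E` and `c_x F = q⁻² F`, which are the first two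
relations. For the third, moving `y` across gives `E F = q (z - q⁻² x)(1 - z⁻¹x⁻¹)` and
`F E = q (1 - q⁻² z⁻¹x⁻¹)(z - x)`, products of Laurent polynomials in the commuting units `x, z`,
whose difference is `(q - q⁻¹)(x - x⁻¹)`.
-/

open ConjAct

section Monoid

variable {M : Type*} [Monoid M]

theorem ConjAct.units_smul_eq_of_mul_eq {u : Mˣ} {a b : M} (h : ↑u * a = b * ↑u) :
    toConjAct u • a = b := by
  rw [units_smul_def, ofConjAct_toConjAct, h, Units.mul_inv_cancel_right]

theorem ConjAct.units_smul_self (u : Mˣ) : toConjAct u • (u : M) = u :=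
  units_smul_eq_of_mul_eq rfl

theorem ConjAct.units_smul_mul (u : Mˣ) (a b : M) :
    (toConjAct u • a) * b = ↑u * a * (↑u⁻¹ * b) := by
  rw [units_smul_def, ofConjAct_toConjAct, mul_assoc]

theorem ConjAct.units_inv_smul_mul (u : Mˣ) (a b : M) :
    (toConjAct u⁻¹ • a) * b = ↑u⁻¹ * a * (↑u * b) := by
  rw [units_smul_mul, inv_inv]

end Monoid

section Algebra

variable {k A : Type*} [Field k] [Ring A] [Algebra k A]

theorem ConjAct.units_smul_eq_smul_iff {u : Aˣ} {a : A} {c : k} :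
    toConjAct u • a = c • a ↔ ↑u * a = c • (a * ↑u) := by
  rw [units_smul_def, ofConjAct_toConjAct, Units.mul_inv_eq_iff_eq_mul, smul_mul_assoc]

theorem ConjAct.units_inv_smul_eq_inv_smul {u : Aˣ} {a : A} {c : k} (hc : c ≠ 0)
    (h : toConjAct u • a = c • a) : toConjAct u⁻¹ • a = c⁻¹ • a := by
  conv_lhs => rw [← inv_smul_smul₀ hc a, ← h, smul_comm, map_inv, inv_smul_smul]

theorem ConjAct.units_smul_units_inv_eq_inv_smul {u v : Aˣ} {c : k} (hc : c ≠ 0)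
    (h : toConjAct u • (v : A) = c • (v : A)) :
    toConjAct u • (↑v⁻¹ : A) = c⁻¹ • (↑v⁻¹ : A) := by
  have hv : (c • (v : A)) * toConjAct u • (↑v⁻¹ : A) = 1 := by
    rw [← h, ← smul_mul', Units.mul_inv, smul_one]
  calc toConjAct u • (↑v⁻¹ : A)
      = (c⁻¹ • (↑v⁻¹ : A)) * ((c • (v : A)) * toConjAct u • (↑v⁻¹ : A)) := by
        rw [← mul_assoc, smul_mul_smul_comm, inv_mul_cancel₀ hc, one_smul, Units.inv_mul, one_mul]
    _ = c⁻¹ • (↑v⁻¹ : A) := by rw [hv, mul_one]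

theorem Commute.sub_smul_mul_sub_eq_smul_sub_inv {x z : Aˣ} (hxz : Commute (x : A) z) (c : k) :
    ((z : A) - c • (x : A)) * (1 - ↑z⁻¹ * ↑x⁻¹) - (1 - c • (↑z⁻¹ * ↑x⁻¹ : A)) * ((z : A) - x) =
      (1 - c) • ((x : A) - ↑x⁻¹) := by
  have hx_zinv : (x : A) * (↑z⁻¹ * ↑x⁻¹) = ↑z⁻¹ := by
    rw [← mul_assoc, hxz.units_inv_right.eq, Units.mul_inv_cancel_right]
  have hzinv_xinv : (↑z⁻¹ * ↑x⁻¹ : A) * z = ↑x⁻¹ := by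
    rw [mul_assoc, hxz.units_inv_left.eq, Units.inv_mul_cancel_left]
  simp only [sub_mul, mul_sub, one_mul, mul_one, smul_mul_assoc, Units.mul_inv_cancel_left,
    hx_zinv, hzinv_xinv, mul_assoc, Units.inv_mul, mul_one]
  module

end Algebra

/-- Let `A` be an associative unital ℂ-algebra, `q ∈ ℂ` nonzero, and let
`x, y, z` be invertible elements of `A` satisfying `xy = q²yx`, `xz = zx`, `yz = zy`.
With `K := x`, `E := q·y·(z − x)`, `F := y⁻¹·(1 − z⁻¹x⁻¹)`, the quantum sl₂ relations hold:
`K·E = q²·E·K`, `K·F = q⁻²·F·K`, and `E·F − F·E = (q − q⁻¹)·(K − K⁻¹)`. -/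
theorem stmt_0 (A : Type*) [Ring A] [Algebra ℂ A] (q : ℂ) (hq : q ≠ 0)
    (x y z : Aˣ)
    (hxy : (x : A) * (y : A) = q ^ 2 • ((y : A) * (x : A)))
    (hxz : (x : A) * (z : A) = (z : A) * (x : A))
    (hyz : (y : A) * (z : A) = (z : A) * (y : A)) :
    ((x : A) * (q • ((y : A) * ((z : A) - (x : A)))) =
        q ^ 2 • ((q • ((y : A) * ((z : A) - (x : A)))) * (x : A))) ∧
    ((x : A) * ((↑y⁻¹ : A) * (1 - (↑z⁻¹ : A) * (↑x⁻¹ : A))) =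
        (q ^ 2)⁻¹ • (((↑y⁻¹ : A) * (1 - (↑z⁻¹ : A) * (↑x⁻¹ : A))) * (x : A))) ∧
    ((q • ((y : A) * ((z : A) - (x : A)))) * ((↑y⁻¹ : A) * (1 - (↑z⁻¹ : A) * (↑x⁻¹ : A))) -
        ((↑y⁻¹ : A) * (1 - (↑z⁻¹ : A) * (↑x⁻¹ : A))) * (q • ((y : A) * ((z : A) - (x : A)))) =
        (q - q⁻¹) • ((x : A) - (↑x⁻¹ : A))) := by
  have hq2 : q ^ 2 ≠ 0 := pow_ne_zero 2 hq
  replace hxz : Commute (x : A) z := hxz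
  replace hyz : Commute (y : A) z := hyz
  have hx_y : toConjAct x • (y : A) = q ^ 2 • (y : A) := units_smul_eq_smul_iff.mpr hxy
  have hx_yinv := units_smul_units_inv_eq_inv_smul hq2 hx_y
  have hy_x : toConjAct y • (x : A) = (q ^ 2)⁻¹ • (x : A) :=
    units_smul_eq_smul_iff.mpr (by rw [hxy, smul_smul, inv_mul_cancel₀ hq2, one_smul])
  have hyinv_x : toConjAct y⁻¹ • (x : A) = q ^ 2 • (x : A) := by
    simpa only [inv_inv] using units_inv_smul_eq_inv_smul (inv_ne_zero hq2) hy_x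
  have hyinv_xinv := units_smul_units_inv_eq_inv_smul hq2 hyinv_x
  refine ⟨units_smul_eq_smul_iff.mp ?_, units_smul_eq_smul_iff.mp ?_, ?_⟩
  · simp only [smul_comm _ q, smul_mul', smul_sub, hx_y, units_smul_self,
      units_smul_eq_of_mul_eq hxz.eq, smul_mul_assoc]
  · simp only [smul_mul', smul_sub, hx_yinv, smul_one, units_smul_eq_of_mul_eq hxz.units_inv_right.eq,
      units_smul_eq_of_mul_eq (Commute.refl (x : A)).units_inv_right.eq, smul_mul_assoc]
  · have hyinv_zinv : toConjAct y⁻¹ • (↑z⁻¹ : A) = ↑z⁻¹ :=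
      units_smul_eq_of_mul_eq hyz.units_inv_left.units_inv_right.eq
    have hy_E : toConjAct y • ((z : A) - x) = z - (q ^ 2)⁻¹ • (x : A) := by
      rw [smul_sub, hy_x, units_smul_eq_of_mul_eq hyz.eq]
    have hyinv_F : toConjAct y⁻¹ • (1 - ↑z⁻¹ * ↑x⁻¹ : A) = 1 - (q ^ 2)⁻¹ • (↑z⁻¹ * ↑x⁻¹ : A) := by
      rw [smul_sub, smul_one, smul_mul', hyinv_zinv, hyinv_xinv, mul_smul_comm]
    rw [smul_mul_assoc, mul_smul_comm, ← smul_sub, ← units_smul_mul, ← units_inv_smul_mul, hy_E,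
      hyinv_F, hxz.sub_smul_mul_sub_eq_smul_sub_inv, smul_smul]
    congr 1
    field_simp
end

section
/- Let A be an associative unital ℂ-algebra, let q ∈ ℂ be nonzero, and let x, y, z be invertible elements of A satisfying xy = q²yx, xz = zx, yz = zy. Define E := q·y·(z − x) and F := y⁻¹·(1 − z⁻¹x⁻¹). Then the image of the Casimir element satisfies E·F + q⁻¹·x + q·x⁻¹ = q·z + q⁻¹·z⁻¹. -/
/-!
Conjugating by `y` turns `E·F` into `(q z - q⁻¹ x)(1 - z⁻¹ x⁻¹)`: `y` commutes with `z`, while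
`xy = q²yx` gives `q·(y x y⁻¹) = q⁻¹·x`. Expanding, the cross term `x z⁻¹ x⁻¹` collapses to `z⁻¹`
since `x` and `z` commute, and what remains is `q z - q x⁻¹ - q⁻¹ x + q⁻¹ z⁻¹`.
-/

theorem smul_conj_eq_inv_smul_of_mul_eq_sq_smul {K A : Type*} [Field K] [Ring A] [Algebra K A]
    (c : K) (x : A) (y : Aˣ) (h : x * y = c ^ 2 • ((y : A) * x)) :
    c • ((y : A) * x * ↑y⁻¹) = c⁻¹ • x := by
  have hx : x = c ^ 2 • ((y : A) * x) * ↑y⁻¹ := (Units.eq_mul_inv_iff_mul_eq y).2 h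
  have hc : c⁻¹ * c ^ 2 = c := by rw [sq, ← mul_assoc, inv_mul_mul_self]
  calc c • ((y : A) * x * ↑y⁻¹) = (c⁻¹ * c ^ 2) • ((y : A) * x * ↑y⁻¹) := by rw [hc]
    _ = c⁻¹ • (c ^ 2 • ((y : A) * x) * ↑y⁻¹) := by rw [mul_smul, smul_mul_assoc]
    _ = c⁻¹ • x := by rw [← hx]

theorem stmt_1_general (A : Type*) [Ring A] [Algebra ℂ A] (q : ℂ)
    (x y z : Aˣ)
    (hxy : (x : A) * (y : A) = q ^ 2 • ((y : A) * (x : A)))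
    (hxz : (x : A) * (z : A) = (z : A) * (x : A))
    (hyz : (y : A) * (z : A) = (z : A) * (y : A)) :
    (q • ((y : A) * ((z : A) - (x : A)))) * ((↑y⁻¹ : A) * (1 - (↑z⁻¹ : A) * (↑x⁻¹ : A)))
        + q⁻¹ • (x : A) + q • (↑x⁻¹ : A)
      = q • (z : A) + q⁻¹ • (↑z⁻¹ : A) := by
  have hyzy : (y : A) * z * ↑y⁻¹ = z := (Units.mul_inv_eq_iff_eq_mul y).2 hyz
  have hE : q • ((y : A) * ((z : A) - x)) * ↑y⁻¹ = q • (z : A) - q⁻¹ • (x : A) := by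
    rw [smul_mul_assoc, mul_sub, sub_mul, hyzy, smul_sub,
      smul_conj_eq_inv_smul_of_mul_eq_sq_smul q (x : A) y hxy]
  have hxzx : (x : A) * ↑z⁻¹ * ↑x⁻¹ = ↑z⁻¹ :=
    (Units.mul_inv_eq_iff_eq_mul x).2 (Commute.units_inv_right hxz).eq
  have hF : (q • (z : A) - q⁻¹ • (x : A)) * (1 - ↑z⁻¹ * ↑x⁻¹)
      = q • (z : A) - q • (↑x⁻¹ : A) - q⁻¹ • (x : A) + q⁻¹ • (↑z⁻¹ : A) := by
    rw [sub_mul, mul_sub, mul_sub, mul_one, mul_one, smul_mul_assoc, smul_mul_assoc,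
      ← mul_assoc, ← mul_assoc, z.mul_inv, one_mul, hxzx]
    abel
  rw [← mul_assoc, hE, hF]
  abel

/-- Let `A` be an associative unital ℂ-algebra, `q ∈ ℂ` nonzero, and let
`x, y, z` be invertible elements of `A` satisfying `xy = q²yx`, `xz = zx`, `yz = zy`.
With `E := q·y·(z − x)` and `F := y⁻¹·(1 − z⁻¹x⁻¹)`, the image of the Casimir element
satisfies `E·F + q⁻¹·x + q·x⁻¹ = q·z + q⁻¹·z⁻¹`. -/
theorem stmt_1 (A : Type*) [Ring A] [Algebra ℂ A] (q : ℂ) (hq : q ≠ 0)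
    (x y z : Aˣ)
    (hxy : (x : A) * (y : A) = q ^ 2 • ((y : A) * (x : A)))
    (hxz : (x : A) * (z : A) = (z : A) * (x : A))
    (hyz : (y : A) * (z : A) = (z : A) * (y : A)) :
    (q • ((y : A) * ((z : A) - (x : A)))) * ((↑y⁻¹ : A) * (1 - (↑z⁻¹ : A) * (↑x⁻¹ : A)))
        + q⁻¹ • (x : A) + q • (↑x⁻¹ : A)
      = q • (z : A) + q⁻¹ • (↑z⁻¹ : A) :=
  stmt_1_general A q x y z hxy hxz hyz
end

section
/- Fix an integer N ≥ 2, set ω := exp(2πi/N), and for x ∈ ℂ write ω^x := exp(2πi x/N). Fix α₁, α₂, β, μ ∈ ℂ. Let V be the ℂ-vector space with basis {e(k₁,k₂,l,p,n)} indexed by (k₁,k₂,l,p) ∈ ℤ⁴ and n ∈ ℤ/N. Define linear operators T₁, T₂, T₃, T₄ on V by: T₁·e(k₁,k₂,l,p,n) = ω^{(β+l)/2 + n}·e(k₁+1,k₂,l,p,n); T₂·e(k₁,k₂,l,p,n) = ω^{−(β+l+μ+Np)/2 − n}·e(k₁,k₂+1,l,p,n); T₃·e(k₁,k₂,l,p,n)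 = ω^{(α₂+k₂−α₁−k₁)/2}·e(k₁,k₂,l+1,p,n−1); T₄·e(k₁,k₂,l,p,n) = ω^{N(α₂+k₂)/2}·e(k₁,k₂,l,p+1,n) (in the exponents, n denotes any integer representative of the class n ∈ ℤ/N; the phases are well defined since ω^N = 1). Then T₁, T₂, T₃, T₄ pairwise commute. -/
/-! Each `Tᵢ` is a weighted shift `shiftOp c s`, and the underlying shifts of the index set commute,
so two of them commute as soon as the weights satisfy `c i * c' (s i) = c' i * c (s' i)`. All weights
are powers of `ω`, and in each pair the two exponents differ by an integer multiple of `N`: by `0` when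
neither weight sees the other shift, by `val (n + 1) - (val n + 1)` when `T₃` moves `n`, and by `-N` for
`T₂, T₄`. -/

/-- `ww N x = ω^x := exp(2πi x/N)`, where `ω = exp(2πi/N)`. -/
noncomputable def ww (N : ℕ) (x : ℂ) : ℂ :=
  Complex.exp (2 * (Real.pi : ℂ) * Complex.I * x / N)

/-- The linear operator on `I → ℂ` acting on coordinates by `(shiftOp c s f) i = c i * f (s i)`;
on basis vectors it acts by `e_j ↦ ∑_{i : s i = j} c i • e_i`. -/
noncomputable def shiftOp {I : Type*} (c : I → ℂ) (s : I → I) :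
    Module.End ℂ (I → ℂ) where
  toFun f := fun i => c i * f (s i)
  map_add' f g := by funext i; simp [mul_add]
  map_smul' a f := by funext i; simp [smul_eq_mul]; ring

/-- The index set of the basis `e(k₁,k₂,l,p,n)`, `(k₁,k₂,l,p) ∈ ℤ⁴`, `n ∈ ℤ/N`. -/
abbrev Idx (N : ℕ) := ℤ × ℤ × ℤ × ℤ × ZMod N

/-- `T₁ · e(k₁,k₂,l,p,n) = ω^{(β+l)/2 + n} · e(k₁+1,k₂,l,p,n)`. -/
noncomputable def T1 (N : ℕ) (β : ℂ) : Module.End ℂ (Idx N → ℂ) :=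
  shiftOp (fun x => ww N ((β + x.2.2.1) / 2 + x.2.2.2.2.val))
    (fun x => (x.1 - 1, x.2.1, x.2.2.1, x.2.2.2.1, x.2.2.2.2))

/-- `T₂ · e(k₁,k₂,l,p,n) = ω^{−(β+l+μ+Np)/2 − n} · e(k₁,k₂+1,l,p,n)`. -/
noncomputable def T2 (N : ℕ) (β μ : ℂ) : Module.End ℂ (Idx N → ℂ) :=
  shiftOp (fun x => ww N (-((β + x.2.2.1 + μ + N * x.2.2.2.1) / 2) - x.2.2.2.2.val))
    (fun x => (x.1, x.2.1 - 1, x.2.2.1, x.2.2.2.1, x.2.2.2.2))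

/-- `T₃ · e(k₁,k₂,l,p,n) = ω^{(α₂+k₂−α₁−k₁)/2} · e(k₁,k₂,l+1,p,n−1)`. -/
noncomputable def T3 (N : ℕ) (α₁ α₂ : ℂ) : Module.End ℂ (Idx N → ℂ) :=
  shiftOp (fun x => ww N ((α₂ + x.2.1 - α₁ - x.1) / 2))
    (fun x => (x.1, x.2.1, x.2.2.1 - 1, x.2.2.2.1, x.2.2.2.2 + 1))

/-- `T₄ · e(k₁,k₂,l,p,n) = ω^{N(α₂+k₂)/2} · e(k₁,k₂,l,p+1,n)`. -/
noncomputable def T4 (N : ℕ) (α₂ : ℂ) : Module.End ℂ (Idx N → ℂ) :=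
  shiftOp (fun x => ww N (N * (α₂ + x.2.1) / 2))
    (fun x => (x.1, x.2.1, x.2.2.1, x.2.2.2.1 - 1, x.2.2.2.2))

theorem ww_add (N : ℕ) (x y : ℂ) : ww N (x + y) = ww N x * ww N y := by
  rw [ww, ww, ww, ← Complex.exp_add]
  ring_nf

theorem ww_natCast_mul_intCast (N : ℕ) (m : ℤ) : ww N (N * m) = 1 := by
  rcases eq_or_ne N 0 with rfl | hN
  · simp [ww]
  · rw [ww, ← Complex.exp_int_mul_two_pi_mul_I m]
    congr 1
    field_simp

theorem ww_eq_of_sub_eq {N : ℕ} {a b : ℂ} (m : ℤ) (h : a - b = N * m) : ww N a = ww N b := by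
  rw [← sub_add_cancel a b, h, add_comm, ww_add, ww_natCast_mul_intCast, mul_one]

theorem ZMod.val_add_one_modEq {N : ℕ} [NeZero N] (n : ZMod N) :
    (n + 1).val ≡ n.val + 1 [MOD N] :=
  (ZMod.natCast_eq_natCast_iff _ _ _).1 (by simp)

theorem shiftOp_commute {I : Type*} {c c' : I → ℂ} {s s' : I → I}
    (hs : ∀ i, s' (s i) = s (s' i)) (hc : ∀ i, c i * c' (s i) = c' i * c (s' i)) :
    Commute (shiftOp c s) (shiftOp c' s') := by
  ext f i
  change c i * (c' (s i) * f (s' (s i))) = c' i * (c (s' i) * f (s (s' i)))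
  rw [hs, ← mul_assoc, ← mul_assoc, hc]

theorem commute_T1_T2 (N : ℕ) (β μ : ℂ) : Commute (T1 N β) (T2 N β μ) :=
  shiftOp_commute (fun _ => rfl) fun _ => mul_comm _ _

theorem commute_T1_T3 (N : ℕ) [NeZero N] (α₁ α₂ β : ℂ) : Commute (T1 N β) (T3 N α₁ α₂) := by
  refine shiftOp_commute (fun _ => rfl) fun i => ?_
  obtain ⟨m, hm⟩ := Nat.modEq_iff_dvd.1 (ZMod.val_add_one_modEq i.2.2.2.2)
  rw [← ww_add, ← ww_add]
  refine ww_eq_of_sub_eq m ?_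
  have hmC := congrArg (Int.cast : ℤ → ℂ) hm
  push_cast at hmC ⊢
  linear_combination hmC

theorem commute_T1_T4 (N : ℕ) (α₂ β : ℂ) : Commute (T1 N β) (T4 N α₂) :=
  shiftOp_commute (fun _ => rfl) fun _ => mul_comm _ _

theorem commute_T2_T3 (N : ℕ) [NeZero N] (α₁ α₂ β μ : ℂ) : Commute (T2 N β μ) (T3 N α₁ α₂) := by
  refine shiftOp_commute (fun _ => rfl) fun i => ?_
  obtain ⟨m, hm⟩ := Nat.modEq_iff_dvd.1 (ZMod.val_add_one_modEq i.2.2.2.2)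
  rw [← ww_add, ← ww_add]
  refine ww_eq_of_sub_eq (-m) ?_
  have hmC := congrArg (Int.cast : ℤ → ℂ) hm
  push_cast at hmC ⊢
  linear_combination -hmC

-- the half-integer phases `ω^{-N/2}` picked up in either order combine to `ω^{-N}`
theorem commute_T2_T4 (N : ℕ) (α₂ β μ : ℂ) : Commute (T2 N β μ) (T4 N α₂) := by
  refine shiftOp_commute (fun _ => rfl) fun i => ?_
  rw [← ww_add, ← ww_add]
  refine ww_eq_of_sub_eq (-1) ?_
  push_cast
  ring

theorem commute_T3_T4 (N : ℕ) (α₁ α₂ : ℂ) : Commute (T3 N α₁ α₂) (T4 N α₂) :=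
  shiftOp_commute (fun _ => rfl) fun _ => mul_comm _ _

/-- Fix `N ≥ 2`, `ω := exp(2πi/N)`, and `α₁, α₂, β, μ ∈ ℂ`. On the space
with basis `{e(k₁,k₂,l,p,n)}`, `(k₁,k₂,l,p) ∈ ℤ⁴`, `n ∈ ℤ/N`, the operators
`T₁·e(k₁,k₂,l,p,n) = ω^{(β+l)/2 + n}·e(k₁+1,k₂,l,p,n)`,
`T₂·e(k₁,k₂,l,p,n) = ω^{−(β+l+μ+Np)/2 − n}·e(k₁,k₂+1,l,p,n)`,
`T₃·e(k₁,k₂,l,p,n) = ω^{(α₂+k₂−α₁−k₁)/2}·e(k₁,k₂,l+1,p,n−1)`,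
`T₄·e(k₁,k₂,l,p,n) = ω^{N(α₂+k₂)/2}·e(k₁,k₂,l,p+1,n)`
pairwise commute. -/
theorem stmt_6 (N : ℕ) (hN : 2 ≤ N) (α₁ α₂ β μ : ℂ) :
    (T1 N β * T2 N β μ = T2 N β μ * T1 N β) ∧
    (T1 N β * T3 N α₁ α₂ = T3 N α₁ α₂ * T1 N β) ∧
    (T1 N β * T4 N α₂ = T4 N α₂ * T1 N β) ∧
    (T2 N β μ * T3 N α₁ α₂ = T3 N α₁ α₂ * T2 N β μ) ∧
    (T2 N β μ * T4 N α₂ = T4 N α₂ * T2 N β μ) ∧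
    (T3 N α₁ α₂ * T4 N α₂ = T4 N α₂ * T3 N α₁ α₂) := by
  have : NeZero N := ⟨by omega⟩
  exact ⟨(commute_T1_T2 N β μ).eq, (commute_T1_T3 N α₁ α₂ β).eq, (commute_T1_T4 N α₂ β).eq,
    (commute_T2_T3 N α₁ α₂ β μ).eq, (commute_T2_T4 N α₂ β μ).eq, (commute_T3_T4 N α₁ α₂).eq⟩
end

section
/- Fix an integer N ≥ 2, set ω := exp(2πi/N), and for x ∈ ℂ write ω^x := exp(2πi x/N). Let ζ⁰, ζ¹ ∈ ℂ satisfy the flattening condition exp(2πi ζ⁰) + exp(−2πi ζ¹) = 1. Suppose g : ℤ → ℂ satisfies the recurrence g(n+1)·(1 − ω^{ζ⁰+n+1}) = g(n) for all n ∈ ℤ (note that 1 − ω^{ζ⁰+m} ≠ 0 for every integer m, since exp(2πiζ⁰) ≠ 1). Define ψ(n) := ω^{−ζ⁰ζ¹/2}·ω^{−n ζ¹}·g(n). Then ψ is N-periodic: ψ(n + N) = ψ(n) for all n ∈ ℤ. -/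
/-!
Iterating the recurrence `N` times gives `g n = g (n + N) · ∏_{k<N} (1 - ω^(ζ⁰+n+1+k))`.
Since the `ω^k` run over the `N`-th roots of unity, the product is
`1 - exp(2πi(ζ⁰+n+1)) = 1 - exp(2πiζ⁰)`, which by the flattening condition is `exp(-2πiζ¹)`:
exactly the factor `ω^(-Nζ¹)` by which the prefactor `ω^(-nζ¹)` changes from `n` to `n + N`.
-/

open Finset Polynomial

theorem IsPrimitiveRoot.prod_range_one_sub_pow_mul {R : Type*} [CommRing R] [IsDomain R] {n : ℕ}
    {ζ : R} (hζ : IsPrimitiveRoot ζ n) (hn : 0 < n) (x : R) :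
    ∏ i ∈ range n, (1 - ζ ^ i * x) = 1 - x ^ n := by
  have h := congrArg (eval 1) (X_pow_sub_C_eq_prod hζ hn (rfl : x ^ n = x ^ n))
  simpa [eval_prod] using h.symm

theorem mul_prod_range_eq_of_mul_eq {M : Type*} [CommMonoid M] {g f : ℤ → M}
    (h : ∀ n, g (n + 1) * f (n + 1) = g n) (n : ℤ) (m : ℕ) :
    g (n + m) * ∏ k ∈ range m, f (n + 1 + k) = g n := by
  induction m with
  | zero => simp
  | succ m ih =>
    rw [prod_range_succ, ← ih, ← h (n + m), Nat.cast_succ, ← add_assoc, mul_assoc,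
      mul_comm (f _), add_right_comm n 1]

theorem Complex.exp_two_pi_I_mul_add_intCast (z : ℂ) (n : ℤ) :
    Complex.exp (2 * Real.pi * Complex.I * (z + n)) =
      Complex.exp (2 * Real.pi * Complex.I * z) := by
  rw [mul_add, mul_comm _ (n : ℂ)]
  exact Complex.exp_periodic.int_mul n _

namespace ww

theorem add (N : ℕ) (x y : ℂ) : ww N (x + y) = ww N x * ww N y := by
  simp only [ww, mul_add, add_div, Complex.exp_add]

theorem natCast_mul (N k : ℕ) (x : ℂ) : ww N (k * x) = ww N x ^ k := by
  rw [ww, ww, ← Complex.exp_nat_mul]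
  ring_nf

theorem pow_self {N : ℕ} (hN : N ≠ 0) (x : ℂ) :
    ww N x ^ N = Complex.exp (2 * Real.pi * Complex.I * x) := by
  rw [← natCast_mul, ww]
  field_simp

theorem isPrimitiveRoot_one {N : ℕ} (hN : N ≠ 0) : IsPrimitiveRoot (ww N 1) N := by
  simpa [ww] using Complex.isPrimitiveRoot_exp N hN

end ww

theorem stmt_11_general (N : ℕ) (ζ₀ ζ₁ : ℂ)
    (hflat : Complex.exp (2 * (Real.pi : ℂ) * Complex.I * ζ₀) +
      Complex.exp (-(2 * (Real.pi : ℂ) * Complex.I * ζ₁)) = 1)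
    (g : ℤ → ℂ)
    (hg : ∀ n : ℤ, g (n + 1) * (1 - ww N (ζ₀ + n + 1)) = g n) :
    ∀ n : ℤ,
      ww N (-(ζ₀ * ζ₁) / 2) * ww N (-((n : ℂ) + N) * ζ₁) * g (n + N) =
      ww N (-(ζ₀ * ζ₁) / 2) * ww N (-(n : ℂ) * ζ₁) * g n := by
  intro n
  rcases N.eq_zero_or_pos with rfl | hN
  · simp -- `ww 0 x = 1`, as `x / 0 = 0`
  have hiter := mul_prod_range_eq_of_mul_eq (f := fun m : ℤ ↦ 1 - ww N (ζ₀ + m))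
    (fun m ↦ by simpa [add_assoc] using hg m) n N
  have hprod : ∏ k ∈ range N, (1 - ww N (ζ₀ + ((n + 1 + k : ℤ) : ℂ))) =
      Complex.exp (-(2 * Real.pi * Complex.I * ζ₁)) := by
    calc _ = ∏ k ∈ range N, (1 - ww N 1 ^ k * ww N (ζ₀ + (n + 1 : ℤ))) := by
          refine prod_congr rfl fun k _ ↦ ?_
          rw [← ww.natCast_mul, mul_one, ← ww.add]
          push_cast
          congr 2
          ring
      _ = 1 - Complex.exp (2 * Real.pi * Complex.I * ζ₀) := by
          rw [(ww.isPrimitiveRoot_one hN.ne').prod_range_one_sub_pow_mul hN, ww.pow_self hN.ne',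
            Complex.exp_two_pi_I_mul_add_intCast]
      _ = _ := by linear_combination -hflat
  have hshift : ww N (-((n : ℂ) + N) * ζ₁) =
      ww N (-(n : ℂ) * ζ₁) * Complex.exp (-(2 * Real.pi * Complex.I * ζ₁)) := by
    rw [show -((n : ℂ) + N) * ζ₁ = -(n : ℂ) * ζ₁ + N * -ζ₁ by ring, ww.add, ww.natCast_mul,
      ww.pow_self hN.ne', mul_neg]
  rw [hshift, ← hiter, hprod]
  ring

/-- Fix `N ≥ 2`, `ω := exp(2πi/N)`. Let `ζ⁰, ζ¹ ∈ ℂ` satisfy the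
flattening condition `exp(2πi ζ⁰) + exp(−2πi ζ¹) = 1`, and let `g : ℤ → ℂ` satisfy the
recurrence `g(n+1)·(1 − ω^{ζ⁰+n+1}) = g(n)` for all `n`. Then the cyclic quantum dilogarithm
`ψ(n) := ω^{−ζ⁰ζ¹/2}·ω^{−n ζ¹}·g(n)` is `N`-periodic: `ψ(n + N) = ψ(n)` for all `n ∈ ℤ`. -/
theorem stmt_11 (N : ℕ) (hN : 2 ≤ N) (ζ₀ ζ₁ : ℂ)
    (hflat : Complex.exp (2 * (Real.pi : ℂ) * Complex.I * ζ₀) +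
      Complex.exp (-(2 * (Real.pi : ℂ) * Complex.I * ζ₁)) = 1)
    (g : ℤ → ℂ)
    (hg : ∀ n : ℤ, g (n + 1) * (1 - ww N (ζ₀ + n + 1)) = g n) :
    ∀ n : ℤ,
      ww N (-(ζ₀ * ζ₁) / 2) * ww N (-((n : ℂ) + N) * ζ₁) * g (n + N) =
      ww N (-(ζ₀ * ζ₁) / 2) * ww N (-(n : ℂ) * ζ₁) * g n :=
  stmt_11_general N ζ₀ ζ₁ hflat g hg
end

section
/- Let g₁, g₂ ∈ SL₂(ℂ), let m₁, m₂ ∈ ℂ be nonzero, and let v₁, v₂ be nonzero row vectors in ℂ² with v₁·g₁ = m₁⁻¹·v₁ and v₂·g₂ = m₂⁻¹·v₂. Let u ∈ ℂ² be a column vector and set u_N := u, u_W := g₁·u, u_S := g₂·g₁·u, u_E := g₁⁻¹·g₂·g₁·u, and v_{2'} := v₂·g₁. Define region parameters a_P := (u_P)₁ (the first coordinate) for P ∈ {N, W, S, E}, segment parameters b₁ := −(v₁)₂/(v₁·u_N), b₂ := −(v₂)₂/(v₂·u_W), b_{1'} := −(v₁)₂/(v₁·u_E), b_{2'} := −(v_{2'})₂/(v_{2'}·u_N),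 and ratios a₁ := a_W/a_N, a₂ := a_S/a_W. Assume all of a_N, a_W, a_S, a_E, b₁, b₂, b_{1'}, b_{2'} are defined (nonzero denominators) and nonzero. Then: (i) b_{1'}·(1 − m₂·a₂·(1 − b₂/(m₁·b₁))) = m₂·b₂/m₁; (ii) b_{2'} = b₁·(1 − (m₁/a₁)·(1 − b₂/(m₁·b₁))); (iii) a_E = a_W⁻¹·( a_N·a_S − (m₁·b₁/b₂)·(a_N − a_W/m₁)·(a_S − a_W/m₂) ). -/
/-!
Three instances of the Plücker identity `y₁ (x ⬝ᵥ w) - x₁ (y ⬝ᵥ w) = w₀ det(x; y)`, for the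
segment pairs (1, 2), (1, 2') and (1', 2), together with the identity
`(y g)₁ x₀ - y₁ (g⁻¹ x)₀ = g₀₁ (y ⬝ᵥ x)` for `det g = 1`, which controls `a_E`, give four linear
relations between the numerators and denominators of the parameters. Dot products are moved
across the crossing by `v ⬝ᵥ (g *ᵥ w) = m⁻¹ (v ⬝ᵥ w)`, and `det(v₁; v₂ g₁) = m₁ det(v₁; v₂)`.
Once everything is expressed through `det(v₁; v₂)`, the three claimed relations are identities
of rational functions.
-/

open Matrix

section CommRing
variable {R : Type*} [CommRing R]

theorem dotProduct_mulVec_of_vecMul_eq_smul {n : Type*} [Fintype n] {v : n → R}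
    {g : Matrix n n R} {c : R} (hv : v ᵥ* g = c • v) (x : n → R) :
    v ⬝ᵥ (g *ᵥ x) = c * (v ⬝ᵥ x) := by
  rw [dotProduct_mulVec, hv, smul_dotProduct, smul_eq_mul]

theorem mul_dotProduct_sub_mul_dotProduct_fin_two (x y w : Fin 2 → R) :
    y 1 * (x ⬝ᵥ w) - x 1 * (y ⬝ᵥ w) = w 0 * (of ![x, y]).det := by
  simp only [det_fin_two, of_apply, cons_val_zero, cons_val_one, dotProduct, Fin.sum_univ_two]
  ring

theorem of_vecMul_vecMul (x y : Fin 2 → R) (g : Matrix (Fin 2) (Fin 2) R) :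
    of ![x ᵥ* g, y ᵥ* g] = of ![x, y] * g := by
  ext i j
  fin_cases i <;> simp [mul_apply, vecMul, dotProduct]

theorem det_of_vecMul_right_of_vecMul_eq_smul {x : Fin 2 → R} {g : Matrix (Fin 2) (Fin 2) R}
    {c : R} (hx : x ᵥ* g = c • x) (hg : g.det = 1) (y : Fin 2 → R) :
    c * (of ![x, y ᵥ* g]).det = (of ![x, y]).det := by
  rw [← mul_one (of ![x, y]).det, ← hg, ← det_mul, ← of_vecMul_vecMul, hx]
  simp only [det_fin_two, of_apply, cons_val_zero, cons_val_one, Pi.smul_apply, smul_eq_mul]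
  ring

theorem vecMul_one_mul_sub_mul_inv_mulVec_zero {g : Matrix (Fin 2) (Fin 2) R} (hg : g.det = 1)
    (x y : Fin 2 → R) :
    (y ᵥ* g) 1 * x 0 - y 1 * (g⁻¹ *ᵥ x) 0 = g 0 1 * (y ⬝ᵥ x) := by
  rw [inv_def, adjugate_fin_two, hg]
  simp only [vecMul, mulVec, dotProduct, Fin.sum_univ_two, Ring.inverse_one, one_smul, of_apply,
    cons_val_zero, cons_val_one]
  ring

end CommRing

section Field
variable {K : Type*} [Field K] {g₁ g₂ : Matrix (Fin 2) (Fin 2) K} {v₁ v₂ : Fin 2 → K} {m₁ m₂ : K}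

theorem crossing_incoming (hm₁ : m₁ ≠ 0) (hev₁ : v₁ ᵥ* g₁ = m₁⁻¹ • v₁) (u : Fin 2 → K) :
    v₂ 1 * (v₁ ⬝ᵥ u) =
      m₁ * (v₁ 1 * (v₂ ⬝ᵥ (g₁ *ᵥ u)) + (g₁ *ᵥ u) 0 * (of ![v₁, v₂]).det) := by
  have h := mul_dotProduct_sub_mul_dotProduct_fin_two v₁ v₂ (g₁ *ᵥ u)
  rw [dotProduct_mulVec_of_vecMul_eq_smul hev₁] at h
  field_simp at h
  linear_combination h

theorem crossing_outgoing_under (hm₁ : m₁ ≠ 0) (hg₁ : g₁.det = 1)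
    (hev₁ : v₁ ᵥ* g₁ = m₁⁻¹ • v₁) (u : Fin 2 → K) :
    (v₂ ᵥ* g₁) 1 * (v₁ ⬝ᵥ u) =
      v₁ 1 * (v₂ ⬝ᵥ (g₁ *ᵥ u)) + m₁ * u 0 * (of ![v₁, v₂]).det := by
  have h := mul_dotProduct_sub_mul_dotProduct_fin_two v₁ (v₂ ᵥ* g₁) u
  rw [← dotProduct_mulVec] at h
  rw [← det_of_vecMul_right_of_vecMul_eq_smul hev₁ hg₁]
  field_simp
  linear_combination h

theorem crossing_outgoing_over (hm₁ : m₁ ≠ 0) (hm₂ : m₂ ≠ 0) (hg₁ : g₁.det = 1)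
    (hev₁ : v₁ ᵥ* g₁ = m₁⁻¹ • v₁) (hev₂ : v₂ ᵥ* g₂ = m₂⁻¹ • v₂) (w : Fin 2 → K) :
    m₂ * (v₂ 1 * (v₁ ⬝ᵥ (g₁⁻¹ *ᵥ (g₂ *ᵥ w)))) =
      m₁ * (v₁ 1 * (v₂ ⬝ᵥ w)) + m₁ * m₂ * (g₂ *ᵥ w) 0 * (of ![v₁, v₂]).det := by
  have h := mul_dotProduct_sub_mul_dotProduct_fin_two v₁ v₂ (g₂ *ᵥ w)
  have hE := dotProduct_mulVec_of_vecMul_eq_smul hev₁ (g₁⁻¹ *ᵥ (g₂ *ᵥ w))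
  rw [mulVec_mulVec, mul_nonsing_inv _ (by simp [hg₁]), one_mulVec] at hE
  rw [dotProduct_mulVec_of_vecMul_eq_smul hev₂, hE] at h
  field_simp at h
  linear_combination h

theorem crossing_east_region (hm₂ : m₂ ≠ 0) (hg₁ : g₁.det = 1)
    (hev₂ : v₂ ᵥ* g₂ = m₂⁻¹ • v₂) (u : Fin 2 → K) :
    m₂ * (v₂ 1 * (g₁⁻¹ *ᵥ (g₂ *ᵥ (g₁ *ᵥ u))) 0) =
      v₂ 1 * u 0 + (m₂ * (g₂ *ᵥ (g₁ *ᵥ u)) 0 - (g₁ *ᵥ u) 0) * (v₂ ᵥ* g₁) 1 := by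
  have hS := vecMul_one_mul_sub_mul_inv_mulVec_zero hg₁ (g₂ *ᵥ (g₁ *ᵥ u)) v₂
  have hW := vecMul_one_mul_sub_mul_inv_mulVec_zero hg₁ (g₁ *ᵥ u) v₂
  rw [dotProduct_mulVec_of_vecMul_eq_smul hev₂] at hS
  rw [mulVec_mulVec, nonsing_inv_mul _ (by simp [hg₁]), one_mulVec] at hW
  field_simp at hS
  linear_combination hW - hS

end Field

theorem stmt_12_general (g₁ g₂ : Matrix (Fin 2) (Fin 2) ℂ)
    (hg₁ : g₁.det = 1)
    (m₁ m₂ : ℂ) (hm₁ : m₁ ≠ 0) (hm₂ : m₂ ≠ 0)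
    (v₁ v₂ : Fin 2 → ℂ)
    (hev₁ : v₁ ᵥ* g₁ = m₁⁻¹ • v₁) (hev₂ : v₂ ᵥ* g₂ = m₂⁻¹ • v₂)
    (u : Fin 2 → ℂ)
    -- the shadow colors of the four regions around the crossing
    (uN uW uS uE : Fin 2 → ℂ)
    (huN : uN = u) (huW : uW = g₁ *ᵥ u) (huS : uS = g₂ *ᵥ (g₁ *ᵥ u))
    (huE : uE = g₁⁻¹ *ᵥ (g₂ *ᵥ (g₁ *ᵥ u)))
    -- the eigenvector of the outgoing under-segment
    (v₂' : Fin 2 → ℂ) (hv₂' : v₂' = v₂ ᵥ* g₁)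
    -- region parameters
    (aN aW aS aE : ℂ)
    (haN : aN = uN 0) (haW : aW = uW 0) (haS : aS = uS 0) (haE : aE = uE 0)
    -- segment parameters (with nonzero denominators)
    (b₁ b₂ b₁' b₂' : ℂ)
    (hd₁ : v₁ ⬝ᵥ uN ≠ 0) (hd₂ : v₂ ⬝ᵥ uW ≠ 0) (hd₁' : v₁ ⬝ᵥ uE ≠ 0)
    (hb₁ : b₁ = -(v₁ 1) / (v₁ ⬝ᵥ uN)) (hb₂ : b₂ = -(v₂ 1) / (v₂ ⬝ᵥ uW))
    (hb₁' : b₁' = -(v₁ 1) / (v₁ ⬝ᵥ uE)) (hb₂' : b₂' = -(v₂' 1) / (v₂' ⬝ᵥ uN))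
    -- ratios of region parameters
    (a₁ a₂ : ℂ) (ha₁ : a₁ = aW / aN) (ha₂ : a₂ = aS / aW)
    -- admissibility: all region and segment parameters are nonzero
    (haW0 : aW ≠ 0)
    (hb₁0 : b₁ ≠ 0) (hb₂0 : b₂ ≠ 0) :
    (b₁' * (1 - m₂ * a₂ * (1 - b₂ / (m₁ * b₁))) = m₂ * b₂ / m₁) ∧
    (b₂' = b₁ * (1 - (m₁ / a₁) * (1 - b₂ / (m₁ * b₁)))) ∧
    (aE = aW⁻¹ * (aN * aS - (m₁ * b₁ / b₂) * (aN - aW / m₁) * (aS - aW / m₂))) := by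
  have hx₁ : v₁ 1 ≠ 0 := by intro h; simp [hb₁, h] at hb₁0
  have hy₁ : v₂ 1 ≠ 0 := by intro h; simp [hb₂, h] at hb₂0
  have hincoming := crossing_incoming (v₂ := v₂) hm₁ hev₁ u
  have hunder := crossing_outgoing_under (v₂ := v₂) hm₁ hg₁ hev₁ u
  have hover := crossing_outgoing_over hm₁ hm₂ hg₁ hev₁ hev₂ (g₁ *ᵥ u)
  have heast := crossing_east_region hm₂ hg₁ hev₂ u
  subst uN uW uS uE v₂' b₁ b₂ b₁' b₂' a₁ a₂
  simp only [← haN, ← haW, ← haS, ← haE] at hincoming hunder hover heast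
  rw [← dotProduct_mulVec]
  refine ⟨?_, ?_, ?_⟩
  · field_simp
    linear_combination (-(m₂ * aS)) * hincoming + aW * hover
  · field_simp
    linear_combination (-aW) * hunder + aN * hincoming
  · field_simp
    linear_combination (aW * (v₁ ⬝ᵥ u)) * heast + (aW * (m₂ * aS - aW)) * hunder
      - (aN * (m₂ * aS - aW)) * hincoming

/-- The octahedral-coordinate relations at a positive crossing of a
shadow-colored tangle diagram, in terms of the region parameters `a_P := (u_P)₁`,
segment parameters `b := −(v)₂/(v·u)`, and meridian parameters `m₁, m₂`. -/
theorem stmt_12 (g₁ g₂ : Matrix (Fin 2) (Fin 2) ℂ)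
    (hg₁ : g₁.det = 1) (hg₂ : g₂.det = 1)
    (m₁ m₂ : ℂ) (hm₁ : m₁ ≠ 0) (hm₂ : m₂ ≠ 0)
    (v₁ v₂ : Fin 2 → ℂ) (hv₁ : v₁ ≠ 0) (hv₂ : v₂ ≠ 0)
    (hev₁ : v₁ ᵥ* g₁ = m₁⁻¹ • v₁) (hev₂ : v₂ ᵥ* g₂ = m₂⁻¹ • v₂)
    (u : Fin 2 → ℂ)
    -- the shadow colors of the four regions around the crossing
    (uN uW uS uE : Fin 2 → ℂ)
    (huN : uN = u) (huW : uW = g₁ *ᵥ u) (huS : uS = g₂ *ᵥ (g₁ *ᵥ u))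
    (huE : uE = g₁⁻¹ *ᵥ (g₂ *ᵥ (g₁ *ᵥ u)))
    -- the eigenvector of the outgoing under-segment
    (v₂' : Fin 2 → ℂ) (hv₂' : v₂' = v₂ ᵥ* g₁)
    -- region parameters
    (aN aW aS aE : ℂ)
    (haN : aN = uN 0) (haW : aW = uW 0) (haS : aS = uS 0) (haE : aE = uE 0)
    -- segment parameters (with nonzero denominators)
    (b₁ b₂ b₁' b₂' : ℂ)
    (hd₁ : v₁ ⬝ᵥ uN ≠ 0) (hd₂ : v₂ ⬝ᵥ uW ≠ 0) (hd₁' : v₁ ⬝ᵥ uE ≠ 0) (hd₂' : v₂' ⬝ᵥ uN ≠ 0)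
    (hb₁ : b₁ = -(v₁ 1) / (v₁ ⬝ᵥ uN)) (hb₂ : b₂ = -(v₂ 1) / (v₂ ⬝ᵥ uW))
    (hb₁' : b₁' = -(v₁ 1) / (v₁ ⬝ᵥ uE)) (hb₂' : b₂' = -(v₂' 1) / (v₂' ⬝ᵥ uN))
    -- ratios of region parameters
    (a₁ a₂ : ℂ) (ha₁ : a₁ = aW / aN) (ha₂ : a₂ = aS / aW)
    -- admissibility: all region and segment parameters are nonzero
    (haN0 : aN ≠ 0) (haW0 : aW ≠ 0) (haS0 : aS ≠ 0) (haE0 : aE ≠ 0)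
    (hb₁0 : b₁ ≠ 0) (hb₂0 : b₂ ≠ 0) (hb₁'0 : b₁' ≠ 0) (hb₂'0 : b₂' ≠ 0) :
    (b₁' * (1 - m₂ * a₂ * (1 - b₂ / (m₁ * b₁))) = m₂ * b₂ / m₁) ∧
    (b₂' = b₁ * (1 - (m₁ / a₁) * (1 - b₂ / (m₁ * b₁)))) ∧
    (aE = aW⁻¹ * (aN * aS - (m₁ * b₁ / b₂) * (aN - aW / m₁) * (aS - aW / m₂))) :=
  stmt_12_general g₁ g₂ hg₁ m₁ m₂ hm₁ hm₂ v₁ v₂ hev₁ hev₂ u uN uW uS uE huN huW huS huE v₂' hv₂' aN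
    aW aS aE haN haW haS haE b₁ b₂ b₁' b₂' hd₁ hd₂ hd₁' hb₁ hb₂ hb₁' hb₂' a₁ a₂ ha₁ ha₂ haW0 hb₁0
    hb₂0
end

section
/- Let g₁, g₂ ∈ SL₂(ℂ), let m₁, m₂ ∈ ℂ be nonzero, and let v₁, v₂ be nonzero row vectors in ℂ² with v₁·g₁ = m₁⁻¹·v₁ and v₂·g₂ = m₂⁻¹·v₂. Let u ∈ ℂ² be a column vector and set u_N := u, u_W := g₁·u, u_S := g₂·g₁·u, u_E := g₂·u, and v_{1'} := v₁·g₂⁻¹. Define region parameters a_P := (u_P)₁ for P ∈ {N, W, S, E}, segment parameters b₁ := −(v₁)₂/(v₁·u_N), b₂ := −(v₂)₂/(v₂·u_W), b_{1'} := −(v_{1'})₂/(v_{1'}·u_E), b_{2'} := −(v₂)₂/(v₂·u_N), and ratios a₁ := a_W/a_N, a₂ := a_S/a_W. Assume all of a_N, a_W, a_S, a_E, b₁, b₂, b_{1'}, b_{2'} are defined (nonzero denominators) and nonzero. Then: (i) b_{1'} = (m₂·b₂/m₁)·(1 − (a₂/m₂)·(1 − m₁·b₁/b₂)); (ii) b_{2'}·(1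 − (1/(m₁·a₁))·(1 − m₁·b₁/b₂)) = b₁; (iii) a_E = a_W⁻¹·( a_N·a_S − (b₂/(m₁·b₁))·(a_N − m₁·a_W)·(a_S − m₂·a_W) ). -/
/-!
Write `π = v 0 / v 1` for the slope of an eigenvector `v` with `v 1 ≠ 0`. The eigenvector
equations together with `det g = 1` force `g 0 0 = m + π * g 0 1`, so
`(g u) 0 = m * u 0 + g 0 1 * (π * u 0 + u 1)`, and `π * u 0 + u 1` is `-b⁻¹` for the segment
parameter `b` of `v` over `u`. Consequently all region and segment parameters at the crossing
are tied by linear relations between `aN, aW, aS, aE` and the reciprocals `b⁻¹`, involving only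
`δ = π₂ - π₁` and `κ = g₂ 0 1`; the three octahedral relations are rational consequences of
these.
-/

open Matrix

section SL2

variable {K : Type*} [Field K]

def segmentParam (v u : Fin 2 → K) : K := -(v 1) / (v ⬝ᵥ u)

variable {g : Matrix (Fin 2) (Fin 2) K} {m : K} {v w : Fin 2 → K}

theorem segmentParam_mulVec (hev : v ᵥ* g = m⁻¹ • v) (u : Fin 2 → K) :
    segmentParam v (g *ᵥ u) = m * segmentParam v u := by
  rw [segmentParam, segmentParam, dotProduct_mulVec, hev, smul_dotProduct, smul_eq_mul,
    div_eq_mul_inv, div_eq_mul_inv, mul_inv, inv_inv]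
  ring

theorem inv_segmentParam (hv : v 1 ≠ 0) (u : Fin 2 → K) :
    (segmentParam v u)⁻¹ = -(v 0 / v 1 * u 0 + u 1) := by
  rw [segmentParam, inv_div, dotProduct, Fin.sum_univ_two]
  field_simp

theorem inv_segmentParam_eq_sub (hv : v 1 ≠ 0) (hw : w 1 ≠ 0) (u : Fin 2 → K) :
    (segmentParam w u)⁻¹ = (segmentParam v u)⁻¹ - (w 0 / w 1 - v 0 / v 1) * u 0 := by
  rw [inv_segmentParam hv, inv_segmentParam hw]
  ring

theorem apply_zero_zero_of_vecMul_eq_inv_smul (hg : g.det = 1) (hm : m ≠ 0)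
    (hev : v ᵥ* g = m⁻¹ • v) (hv : v 1 ≠ 0) :
    g 0 0 = m + v 0 / v 1 * g 0 1 := by
  have h₀ := congrFun hev 0
  have h₁ := congrFun hev 1
  simp only [vecMul, dotProduct, Fin.sum_univ_two, Pi.smul_apply, smul_eq_mul] at h₀ h₁
  rw [det_fin_two] at hg
  field_simp
  -- the eigenvector equations turn `v 1 * det g` into `m⁻¹ * (v 1 * g 0 0 - v 0 * g 0 1)`
  linear_combination m * v 1 * hg + m * g 0 1 * h₀ - m * g 0 0 * h₁
    + (g 0 1 * v 0 - g 0 0 * v 1) * mul_inv_cancel₀ hm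

theorem mulVec_apply_zero_of_vecMul_eq_inv_smul (hg : g.det = 1) (hm : m ≠ 0)
    (hev : v ᵥ* g = m⁻¹ • v) (hv : v 1 ≠ 0) (u : Fin 2 → K) :
    (g *ᵥ u) 0 = m * u 0 - g 0 1 * (segmentParam v u)⁻¹ := by
  rw [inv_segmentParam hv, mulVec, dotProduct, Fin.sum_univ_two,
    apply_zero_zero_of_vecMul_eq_inv_smul hg hm hev hv]
  ring

theorem segmentParam_vecMul_inv (hg : g.det = 1) (hm : m ≠ 0) (hev : v ᵥ* g = m⁻¹ • v)
    (hv : v 1 ≠ 0) (hw : w 1 ≠ 0) (u : Fin 2 → K) :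
    segmentParam (w ᵥ* g⁻¹) (g *ᵥ u) =
      segmentParam w u * (m + (v 0 / v 1 - w 0 / w 1) * g 0 1) := by
  have hinv : g⁻¹ = g.adjugate := by rw [inv_def, hg, Ring.inverse_one, one_smul]
  have hdot : (w ᵥ* g⁻¹) ⬝ᵥ (g *ᵥ u) = w ⬝ᵥ u := by
    rw [dotProduct_mulVec, vecMul_vecMul, nonsing_inv_mul g (by simp [hg]), vecMul_one]
  have hentry : (w ᵥ* g⁻¹) 1 = w 1 * (m + (v 0 / v 1 - w 0 / w 1) * g 0 1) := by
    rw [hinv, adjugate_fin_two, apply_zero_zero_of_vecMul_eq_inv_smul hg hm hev hv]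
    simp only [vecMul, dotProduct, Fin.sum_univ_two, of_apply, cons_val', cons_val_zero,
      cons_val_one, cons_val_fin_one]
    field_simp
    ring
  rw [segmentParam, segmentParam, hdot, hentry]
  ring

end SL2

section OctahedralRelations

variable {K : Type*} [Field K] {m₁ m₂ aN aW aS aE b₁ b₂ b₁' b₂' δ κ : K}

theorem one_sub_mul_div_eq_of_inv_eq (hb₁ : b₁ ≠ 0) (hm₁ : m₁ ≠ 0)
    (h₂ : b₂⁻¹ = (m₁ * b₁)⁻¹ - δ * aW) :
    1 - m₁ * b₁ / b₂ = m₁ * b₁ * δ * aW := by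
  rw [div_eq_mul_inv, h₂]
  field_simp
  ring

theorem octahedral_relations_of_inv_eq (hm₁ : m₁ ≠ 0) (hm₂ : m₂ ≠ 0) (haW : aW ≠ 0)
    (hb₁ : b₁ ≠ 0) (hb₂ : b₂ ≠ 0) (hb₂' : b₂' ≠ 0)
    (h₂ : b₂⁻¹ = (m₁ * b₁)⁻¹ - δ * aW) (h₂' : b₂'⁻¹ = b₁⁻¹ - δ * aN)
    (hS : aS = m₂ * aW - κ * b₂⁻¹) (hE : aE = m₂ * aN - κ * b₂'⁻¹)
    (h₁' : b₁' = b₁ * (m₂ + δ * κ)) :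
    (b₁' = (m₂ * b₂ / m₁) * (1 - (aS / aW / m₂) * (1 - m₁ * b₁ / b₂))) ∧
    (b₂' * (1 - (1 / (m₁ * (aW / aN))) * (1 - m₁ * b₁ / b₂)) = b₁) ∧
    (aE = aW⁻¹ * (aN * aS - (b₂ / (m₁ * b₁)) * (aN - m₁ * aW) * (aS - m₂ * aW))) := by
  rw [one_sub_mul_div_eq_of_inv_eq hb₁ hm₁ h₂]
  have hb₂_eq : m₁ * b₁ = b₂ * (1 - m₁ * b₁ * δ * aW) := by
    field_simp at h₂; linear_combination h₂
  have hb₂'_eq : b₁ = b₂' * (1 - b₁ * δ * aN) := by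
    field_simp at h₂'; linear_combination h₂'
  refine ⟨?_, ?_, ?_⟩
  · rw [h₁', hS]
    field_simp
    linear_combination m₂ * hb₂_eq
  · field_simp
    linear_combination -hb₂'_eq
  · rw [hE, hS]
    field_simp
    linear_combination κ * aN * b₂' * hb₂_eq - κ * aW * b₂ * m₁ * hb₂'_eq

end OctahedralRelations

theorem stmt_13_general (g₁ g₂ : Matrix (Fin 2) (Fin 2) ℂ)
    (hg₂ : g₂.det = 1)
    (m₁ m₂ : ℂ) (hm₁ : m₁ ≠ 0) (hm₂ : m₂ ≠ 0)
    (v₁ v₂ : Fin 2 → ℂ)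
    (hev₁ : v₁ ᵥ* g₁ = m₁⁻¹ • v₁) (hev₂ : v₂ ᵥ* g₂ = m₂⁻¹ • v₂)
    (u : Fin 2 → ℂ)
    -- the shadow colors of the four regions around the crossing
    (uN uW uS uE : Fin 2 → ℂ)
    (huN : uN = u) (huW : uW = g₁ *ᵥ u) (huS : uS = g₂ *ᵥ (g₁ *ᵥ u))
    (huE : uE = g₂ *ᵥ u)
    -- the eigenvector of the outgoing under-segment
    (v₁' : Fin 2 → ℂ) (hv₁' : v₁' = v₁ ᵥ* g₂⁻¹)
    -- region parameters
    (aN aW aS aE : ℂ)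
    (haN : aN = uN 0) (haW : aW = uW 0) (haS : aS = uS 0) (haE : aE = uE 0)
    -- segment parameters (with nonzero denominators)
    (b₁ b₂ b₁' b₂' : ℂ)
    (hb₁ : b₁ = -(v₁ 1) / (v₁ ⬝ᵥ uN)) (hb₂ : b₂ = -(v₂ 1) / (v₂ ⬝ᵥ uW))
    (hb₁' : b₁' = -(v₁' 1) / (v₁' ⬝ᵥ uE)) (hb₂' : b₂' = -(v₂ 1) / (v₂ ⬝ᵥ uN))
    -- ratios of region parameters
    (a₁ a₂ : ℂ) (ha₁ : a₁ = aW / aN) (ha₂ : a₂ = aS / aW)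
    -- admissibility: all region and segment parameters are nonzero
    (haW0 : aW ≠ 0)
    (hb₁0 : b₁ ≠ 0) (hb₂0 : b₂ ≠ 0) (hb₂'0 : b₂' ≠ 0) :
    (b₁' = (m₂ * b₂ / m₁) * (1 - (a₂ / m₂) * (1 - m₁ * b₁ / b₂))) ∧
    (b₂' * (1 - (1 / (m₁ * a₁)) * (1 - m₁ * b₁ / b₂)) = b₁) ∧
    (aE = aW⁻¹ * (aN * aS - (b₂ / (m₁ * b₁)) * (aN - m₁ * aW) * (aS - m₂ * aW))) := by
  subst uN uW uS uE v₁' aN aW aS aE a₁ a₂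
  have hq₁ : v₁ 1 ≠ 0 := fun h => hb₁0 (by rw [hb₁, h, neg_zero, zero_div])
  have hq₂ : v₂ 1 ≠ 0 := fun h => hb₂0 (by rw [hb₂, h, neg_zero, zero_div])
  change b₁ = segmentParam v₁ u at hb₁
  change b₂ = segmentParam v₂ (g₁ *ᵥ u) at hb₂
  change b₁' = segmentParam (v₁ ᵥ* g₂⁻¹) (g₂ *ᵥ u) at hb₁'
  change b₂' = segmentParam v₂ u at hb₂'
  subst b₁ b₂ b₁' b₂'
  exact octahedral_relations_of_inv_eq hm₁ hm₂ haW0 hb₁0 hb₂0 hb₂'0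
    (by rw [inv_segmentParam_eq_sub hq₁ hq₂, segmentParam_mulVec hev₁])
    (inv_segmentParam_eq_sub hq₁ hq₂ u)
    (mulVec_apply_zero_of_vecMul_eq_inv_smul hg₂ hm₂ hev₂ hq₂ _)
    (mulVec_apply_zero_of_vecMul_eq_inv_smul hg₂ hm₂ hev₂ hq₂ u)
    (segmentParam_vecMul_inv hg₂ hm₂ hev₂ hq₂ hq₁ u)

/-- The octahedral-coordinate relations at a negative crossing of a
shadow-colored tangle diagram, in terms of the region parameters `a_P := (u_P)₁`,
segment parameters `b := −(v)₂/(v·u)`, and meridian parameters `m₁, m₂`. -/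
theorem stmt_13 (g₁ g₂ : Matrix (Fin 2) (Fin 2) ℂ)
    (hg₁ : g₁.det = 1) (hg₂ : g₂.det = 1)
    (m₁ m₂ : ℂ) (hm₁ : m₁ ≠ 0) (hm₂ : m₂ ≠ 0)
    (v₁ v₂ : Fin 2 → ℂ) (hv₁ : v₁ ≠ 0) (hv₂ : v₂ ≠ 0)
    (hev₁ : v₁ ᵥ* g₁ = m₁⁻¹ • v₁) (hev₂ : v₂ ᵥ* g₂ = m₂⁻¹ • v₂)
    (u : Fin 2 → ℂ)
    -- the shadow colors of the four regions around the crossing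
    (uN uW uS uE : Fin 2 → ℂ)
    (huN : uN = u) (huW : uW = g₁ *ᵥ u) (huS : uS = g₂ *ᵥ (g₁ *ᵥ u))
    (huE : uE = g₂ *ᵥ u)
    -- the eigenvector of the outgoing under-segment
    (v₁' : Fin 2 → ℂ) (hv₁' : v₁' = v₁ ᵥ* g₂⁻¹)
    -- region parameters
    (aN aW aS aE : ℂ)
    (haN : aN = uN 0) (haW : aW = uW 0) (haS : aS = uS 0) (haE : aE = uE 0)
    -- segment parameters (with nonzero denominators)
    (b₁ b₂ b₁' b₂' : ℂ)
    (hd₁ : v₁ ⬝ᵥ uN ≠ 0) (hd₂ : v₂ ⬝ᵥ uW ≠ 0) (hd₁' : v₁' ⬝ᵥ uE ≠ 0) (hd₂' : v₂ ⬝ᵥ uN ≠ 0)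
    (hb₁ : b₁ = -(v₁ 1) / (v₁ ⬝ᵥ uN)) (hb₂ : b₂ = -(v₂ 1) / (v₂ ⬝ᵥ uW))
    (hb₁' : b₁' = -(v₁' 1) / (v₁' ⬝ᵥ uE)) (hb₂' : b₂' = -(v₂ 1) / (v₂ ⬝ᵥ uN))
    -- ratios of region parameters
    (a₁ a₂ : ℂ) (ha₁ : a₁ = aW / aN) (ha₂ : a₂ = aS / aW)
    -- admissibility: all region and segment parameters are nonzero
    (haN0 : aN ≠ 0) (haW0 : aW ≠ 0) (haS0 : aS ≠ 0) (haE0 : aE ≠ 0)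
    (hb₁0 : b₁ ≠ 0) (hb₂0 : b₂ ≠ 0) (hb₁'0 : b₁' ≠ 0) (hb₂'0 : b₂' ≠ 0) :
    (b₁' = (m₂ * b₂ / m₁) * (1 - (a₂ / m₂) * (1 - m₁ * b₁ / b₂))) ∧
    (b₂' * (1 - (1 / (m₁ * a₁)) * (1 - m₁ * b₁ / b₂)) = b₁) ∧
    (aE = aW⁻¹ * (aN * aS - (b₂ / (m₁ * b₁)) * (aN - m₁ * aW) * (aS - m₂ * aW))) :=
  stmt_13_general g₁ g₂ hg₂ m₁ m₂ hm₁ hm₂ v₁ v₂ hev₁ hev₂ u uN uW uS uE huN huW huS huE v₁' hv₁' aN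
    aW aS aE haN haW haS haE b₁ b₂ b₁' b₂' hb₁ hb₂ hb₁' hb₂' a₁ a₂ ha₁ ha₂ haW0 hb₁0 hb₂0 hb₂'0
end
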